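/- For every α : Finset Q, every β ∈ S_X and every γ ∈ Z_X(S): G_{α Δ β} = G_α and H_{α Δ γ} = H_α. (Lemma 1, invariance of G under stabilizers and of H under undetectable X errors.) -/

import Mathlib

open Finset
open scoped symmDiff Matrix

namespace CC

variable {Q : Type*} [Fintype Q] [DecidableEq Q]

/-- A subgroup of the abelian group `(Finset Q, ∆)`. -/
def IsSubgroup (S : Set (Finset Q)) : Prop :=
  ∅ ∈ S ∧ ∀ a ∈ S, ∀ b ∈ S, a ∆ b ∈ S

/-- The subgroup of `(Finset Q, ∆)` generated by a set. -/
def closure (T : Set (Finset Q)) : Set (Finset Q) :=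
  ⋂₀ {S : Set (Finset Q) | IsSubgroup S ∧ T ⊆ S}

/-- A CSS stabilizer code on the qubits `Q`. -/
structure CSS (Q : Type*) [Fintype Q] [DecidableEq Q] where
  SX : Set (Finset Q)
  SZ : Set (Finset Q)
  hSX : IsSubgroup SX
  hSZ : IsSubgroup SZ
  comm : ∀ a ∈ SZ, ∀ b ∈ SX, 2 ∣ (a ∩ b).card

def ZX (C : CSS Q) : Set (Finset Q) := {γ | ∀ f ∈ C.SZ, 2 ∣ (γ ∩ f).card}

def ZZ (C : CSS Q) : Set (Finset Q) := {z | ∀ c ∈ C.SX, 2 ∣ (z ∩ c).card}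

/-- Duality assumption. -/
def Dual (C : CSS Q) : Prop :=
  C.SZ = {z | ∀ γ ∈ ZX C, 2 ∣ (z ∩ γ).card} ∧
  C.SX = {c | ∀ z ∈ ZZ C, 2 ∣ (c ∩ z).card}

def LogicalX (C : CSS Q) (l : Finset Q) : Prop := l ∈ ZX C ∧ l ∉ C.SX

def LogicalZ (C : CSS Q) (l : Finset Q) : Prop := l ∈ ZZ C ∧ l ∉ C.SZ

/-- Single-logical-qubit assumption. -/
def SingleQubit (C : CSS Q) : Prop :=
  (ZX C ≠ C.SX ∧ ∀ l l', LogicalX C l → LogicalX C l' → l ∆ l' ∈ C.SX) ∧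
  (ZZ C ≠ C.SZ ∧ ∀ l l', LogicalZ C l → LogicalZ C l' → l ∆ l' ∈ C.SZ)

/-- Intersection axiom. -/
def Inter (C : CSS Q) : Prop :=
  ZZ C = {x | ∃ α ∈ ZX C, ∃ β ∈ ZX C, x = α ∩ β}

def G (C : CSS Q) (α : Finset Q) : Set (Finset Q) :=
  closure (C.SZ ∪ {x | ∃ β ∈ ZX C, x = α ∩ β})

def H (C : CSS Q) (α : Finset Q) : Set (Finset Q) :=
  closure (C.SZ ∪ {x | ∃ β ∈ C.SX, x = α ∩ β})

def Zof (K : Set (Finset Q)) : Set (Finset Q) := {γ | ∀ h ∈ K, 2 ∣ (γ ∩ h).card}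

def Tolerable (C : CSS Q) (α : Finset Q) : Prop := ∀ z ∈ G C α, ¬ LogicalZ C z

def g (b : Q → ℤ) (s : Finset Q) : ℤ := ∑ q ∈ s, b q

/-- T-invariance assumption. -/
def TInv (C : CSS Q) (b : Q → ℤ) : Prop :=
  (∀ β ∈ C.SX, (8 : ℤ) ∣ g b β) ∧
  (∀ β ∈ C.SX, ∀ γ ∈ ZX C, (8 : ℤ) ∣ (g b β - 2 * g b (γ ∩ β)))

def E (C : CSS Q) (b : Q → ℤ) (α : Finset Q) : Set (Finset Q) :=
  {z | ∀ γ ∈ Zof (G C α), g b (γ ∩ α) ≡ 2 * ((z ∩ γ).card : ℤ) [ZMOD 4]}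

/- Quantum setting -/

abbrev M (Q : Type*) [Fintype Q] [DecidableEq Q] :=
  Matrix (Q → ZMod 2) (Q → ZMod 2) ℂ

def supp (v : Q → ZMod 2) : Finset Q := Finset.univ.filter (fun q => v q = 1)

def ind (α : Finset Q) : Q → ZMod 2 := fun q => if q ∈ α then 1 else 0

def XM (α : Finset Q) : M Q :=
  Matrix.of fun u v => if u = v + ind α then (1 : ℂ) else 0

noncomputable def ZM (α : Finset Q) : M Q :=
  Matrix.diagonal fun v => (-1 : ℂ) ^ (supp v ∩ α).card

noncomputable def AM (b : Q → ℤ) (α : Finset Q) : M Q :=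
  Matrix.diagonal fun v => Complex.I ^ (g b (α ∩ supp v))

noncomputable def UM (b : Q → ℤ) : M Q :=
  Matrix.diagonal fun v => Complex.exp (Real.pi * Complex.I / 4) ^ (g b (supp v))

def Encoded (C : CSS Q) (ρ : M Q) : Prop :=
  ρ.trace = 1 ∧
  (∀ c ∈ C.SX, XM c * ρ = ρ ∧ ρ * XM c = ρ) ∧
  (∀ f ∈ C.SZ, ZM f * ρ = ρ ∧ ρ * ZM f = ρ)

instance : Std.Commutative (α := Finset Q) (· ∆ ·) := ⟨symmDiff_comm⟩
instance : Std.Associative (α := Finset Q) (· ∆ ·) := ⟨symmDiff_assoc⟩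

/-- Iterated symmetric difference over a finite index set. -/
def bigΔ {ι : Type*} (s : Finset ι) (f : ι → Finset Q) : Finset Q :=
  s.fold (· ∆ ·) ∅ f

end CC

/-
Intersecting with a shifted set `(α ∆ β) ∩ δ = (α ∩ δ) ∆ (β ∩ δ)` changes a generator by
`β ∩ δ`. For `β ∈ S_X` and `δ ∈ Z_X(S)`, the intersection axiom puts `δ ∩ γ'` in `Z_Z(S)` for every
`γ' ∈ Z_X(S)`, so `|β ∩ δ ∩ γ'|` is even and duality gives `β ∩ δ ∈ S_Z`. Hence the shifted
generators already lie in the unshifted group, and since shifting twice by `β` is the identity,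
the two groups coincide. The same argument with the roles of `β` and `γ` exchanged handles `H`.
-/

namespace CC

section

variable {Q : Type*} [DecidableEq Q]

lemma closure_isSubgroup (T : Set (Finset Q)) : IsSubgroup (closure T) :=
  ⟨fun _ hS => hS.1.1, fun a ha b hb S hS => hS.1.2 a (ha S hS) b (hb S hS)⟩

lemma subset_closure (T : Set (Finset Q)) : T ⊆ closure T :=
  fun _ hx _ hS => hS.2 hx

lemma closure_subset_closure {T T' : Set (Finset Q)} (h : T ⊆ closure T') :
    closure T ⊆ closure T' :=
  fun _ hx => hx _ ⟨closure_isSubgroup T', h⟩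

lemma closure_union_inter_symmDiff_subset (S B : Set (Finset Q)) (α β : Finset Q)
    (h : ∀ δ ∈ B, β ∩ δ ∈ S) :
    closure (S ∪ {x | ∃ δ ∈ B, x = (α ∆ β) ∩ δ}) ⊆ closure (S ∪ {x | ∃ δ ∈ B, x = α ∩ δ}) := by
  refine closure_subset_closure ?_
  rintro x (hx | ⟨δ, hδ, rfl⟩)
  · exact subset_closure _ (Or.inl hx)
  · rw [show (α ∆ β) ∩ δ = (α ∩ δ) ∆ (β ∩ δ) from inf_symmDiff_distrib_right α β δ]
    exact (closure_isSubgroup _).2 _ (subset_closure _ (Or.inr ⟨δ, hδ, rfl⟩))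
      _ (subset_closure _ (Or.inl (h δ hδ)))

lemma closure_union_inter_symmDiff (S B : Set (Finset Q)) (α β : Finset Q)
    (h : ∀ δ ∈ B, β ∩ δ ∈ S) :
    closure (S ∪ {x | ∃ δ ∈ B, x = (α ∆ β) ∩ δ}) = closure (S ∪ {x | ∃ δ ∈ B, x = α ∩ δ}) := by
  refine (closure_union_inter_symmDiff_subset S B α β h).antisymm ?_
  simpa only [symmDiff_symmDiff_cancel_right] using
    closure_union_inter_symmDiff_subset S B (α ∆ β) β h

end

variable {Q : Type*} [Fintype Q] [DecidableEq Q]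

lemma inter_mem_SZ (C : CSS Q) (hdual : Dual C) (hinter : Inter C)
    {β δ : Finset Q} (hβ : β ∈ C.SX) (hδ : δ ∈ ZX C) : β ∩ δ ∈ C.SZ := by
  rw [hdual.1]
  intro γ hγ
  have hZZ : δ ∩ γ ∈ ZZ C := hinter ▸ ⟨δ, hδ, γ, hγ, rfl⟩
  simpa only [inter_comm, inter_left_comm] using hZZ β hβ

/-- Lemma 1: invariance of `G` under stabilizers and of `H` under undetectable `X` errors. -/
theorem G_H_invariance
    (C : CSS Q) (hdual : Dual C) (hinter : Inter C)
    (α β γ : Finset Q) (hβ : β ∈ C.SX) (hγ : γ ∈ ZX C) :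
    G C (α ∆ β) = G C α ∧ H C (α ∆ γ) = H C α :=
  ⟨closure_union_inter_symmDiff _ _ α β fun _ hδ => inter_mem_SZ C hdual hinter hβ hδ,
    closure_union_inter_symmDiff _ _ α γ fun _ hb =>
      inter_comm γ _ ▸ inter_mem_SZ C hdual hinter hb hγ⟩

end CC
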